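/- arXiv:2404.08879 — 11 statements merged into one kernel-verified Lean document; each statement's English description precedes it below -/
import Mathlib

section
/- Let τ₀, γ, k_p be positive real numbers. The cubic polynomial τ X³ + X² + γ X + k_p has all complex roots with strictly negative real part for every τ ∈ (0, τ₀] if and only if γ − τ₀ k_p > 0. -/
theorem cubic_robust_hurwitz_iff (τ₀ γ kp : ℝ) (hτ₀ : 0 < τ₀) (hγ : 0 < γ) (hkp : 0 < kp) :
    (∀ τ : ℝ, 0 < τ → τ ≤ τ₀ →
      ∀ z : ℂ, (τ : ℂ) * z^3 + z^2 + (γ : ℂ) * z + (kp : ℂ) = 0 → z.re < 0)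
      ↔ γ - τ₀ * kp > 0 := by
  constructor
  · intro h
    by_contra hc
    push_neg at hc
    have hτ : (0:ℝ) < γ / kp := div_pos hγ hkp
    have hle : γ / kp ≤ τ₀ := by
      rw [div_le_iff₀ hkp]; linarith
    set s : ℝ := Real.sqrt kp with hs
    have hs2 : s^2 = kp := Real.sq_sqrt hkp.le
    have hwc : ((s:ℂ))^2 = (kp:ℂ) := by exact_mod_cast congrArg Complex.ofReal hs2
    have ht : (γ/kp) * kp = γ := div_mul_cancel₀ γ hkp.ne'
    have htc : ((γ/kp : ℝ) : ℂ) * (kp:ℂ) = (γ:ℂ) := by exact_mod_cast congrArg Complex.ofReal ht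
    have hroot : ((γ/kp : ℝ) : ℂ) * (Complex.I * s)^3 + (Complex.I * s)^2
        + (γ:ℂ) * (Complex.I * s) + (kp:ℂ) = 0 := by
      linear_combination (-Complex.I * (s:ℂ)) * htc
        + (-((γ/kp : ℝ):ℂ) * Complex.I * (s:ℂ) - 1) * hwc
        + (((γ/kp : ℝ):ℂ) * Complex.I * (s:ℂ)^3 + (s:ℂ)^2) * Complex.I_sq
    have := h (γ/kp) hτ hle (Complex.I * s) hroot
    simp at this
  · intro hrob τ hτpos hττ₀ z hz
    by_contra ha0
    push_neg at ha0
    set a : ℝ := z.re with harea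
    set b : ℝ := z.im with himb
    have h1 : τ*(a^3 - 3*a*b^2) + (a^2 - b^2) + γ*a + kp = 0 := by
      have h := congrArg Complex.re hz
      simp [pow_succ, Complex.add_re, Complex.mul_re, Complex.mul_im,
        Complex.ofReal_re, Complex.ofReal_im] at h
      ring_nf at h ⊢
      linarith
    have h2 : τ*(3*a^2*b - b^3) + 2*a*b + γ*b = 0 := by
      have h := congrArg Complex.im hz
      simp [pow_succ, Complex.add_im, Complex.mul_re, Complex.mul_im,
        Complex.ofReal_re, Complex.ofReal_im] at h
      ring_nf at h ⊢
      linarith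
    have hτkp : τ * kp < γ := by nlinarith
    rcases eq_or_ne b 0 with hb | hb
    · rw [hb] at h1
      nlinarith [mul_nonneg hτpos.le (mul_nonneg (mul_nonneg ha0 ha0) ha0),
        mul_nonneg ha0 ha0, mul_nonneg hγ.le ha0]
    · have key : τ*b^2 = 3*τ*a^2 + 2*a + γ := by
        have hfac : b * (3*τ*a^2 - τ*b^2 + 2*a + γ) = 0 := by linear_combination h2
        rcases mul_eq_zero.mp hfac with h | h
        · exact absurd h hb
        · linarith
      have hid : τ*kp = 8*τ^2*a^3 + 8*τ*a^2 + 2*γ*τ*a + 2*a + γ := by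
        linear_combination τ * h1 + (3*a*τ + 1) * key
      nlinarith [mul_nonneg (mul_nonneg (mul_nonneg hτpos.le hτpos.le) ha0)
        (mul_nonneg ha0 ha0), mul_nonneg (mul_nonneg hτpos.le ha0) ha0,
        mul_nonneg (mul_nonneg hγ.le hτpos.le) ha0]
end

section
/- Let k_a > 1, ℓ > 0, and let k_v, k_p, h_w, τ₀ be positive real numbers with γ := k_v + h_w k_p satisfying γ − τ₀ k_p > 0. Then there exist ω > 0 and τ ∈ (0, τ₀] such that |−k_a ω² e^{−iωℓ} + i k_v ω + k_p| > |−iτω³ − ω² + iγω + k_p|. -/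
/-!
Take the parasitic lag `τ = τ₀ / ω³`: the cubic term of the denominator then has modulus exactly
`τ₀`, so the denominator has modulus at most `ω² + O(ω)`. The delay only rotates the leading
term of the numerator, so the numerator has modulus at least `k_a ω² - O(ω)`, and since
`k_a > 1` it wins once `ω` is large.
-/

open Complex

lemma exists_one_le_linear_lt_mul_sq {c : ℝ} (hc : 0 < c) (a b : ℝ) :
    ∃ ω : ℝ, 1 ≤ ω ∧ a * ω + b < c * ω ^ 2 := by
  set ω := (|a| + |b|) / c + 1 with hω_def
  have hω : 1 ≤ ω := by
    have : 0 ≤ (|a| + |b|) / c := by positivity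
    linarith
  have hcω : |a| + |b| < c * ω := by
    rw [hω_def, mul_add, mul_div_cancel₀ _ hc.ne']
    linarith
  refine ⟨ω, hω, ?_⟩
  calc a * ω + b ≤ |a| * ω + |b| * ω := by
        gcongr
        · exact le_abs_self a
        · exact (le_abs_self b).trans (le_mul_of_one_le_right (abs_nonneg b) hω)
    _ = (|a| + |b|) * ω := by ring
    _ < c * ω * ω := by gcongr
    _ = c * ω ^ 2 := by ring

lemma norm_delayed_numerator_ge (ka kv kp ω ℓ : ℝ) :
    |ka| * ω ^ 2 - |kv| * |ω| - |kp| ≤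
      ‖-(ka : ℂ) * (ω : ℂ) ^ 2 * exp (-(I * ω * ℓ)) + I * kv * ω + kp‖ := by
  have hphase : ‖exp (-(I * ω * ℓ))‖ = 1 := by
    rw [show -(I * ω * ℓ) = I * ((-(ω * ℓ) : ℝ) : ℂ) by push_cast; ring]
    exact norm_exp_I_mul_ofReal _
  have hlead : ‖-(ka : ℂ) * (ω : ℂ) ^ 2 * exp (-(I * ω * ℓ))‖ = |ka| * ω ^ 2 := by
    simp [hphase]
  have hrest : ‖I * kv * ω + (kp : ℂ)‖ ≤ |kv| * |ω| + |kp| :=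
    (norm_add_le _ _).trans_eq (by simp)
  have := norm_le_add_norm_add (-(ka : ℂ) * (ω : ℂ) ^ 2 * exp (-(I * ω * ℓ))) (I * kv * ω + kp)
  rw [hlead, ← add_assoc] at this
  linarith

lemma norm_denominator_le (τ γ kp ω : ℝ) :
    ‖-(I * τ * (ω : ℂ) ^ 3) - (ω : ℂ) ^ 2 + I * γ * ω + kp‖ ≤
      |τ| * |ω| ^ 3 + ω ^ 2 + |γ| * |ω| + |kp| := by
  calc _ ≤ ‖-(I * τ * (ω : ℂ) ^ 3)‖ + ‖(ω : ℂ) ^ 2‖ + ‖I * γ * ω‖ + ‖(kp : ℂ)‖ := by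
        grw [norm_add_le, norm_add_le, norm_sub_le]
    _ = _ := by simp [sq_abs]

theorem string_stability_fails_ka_gt_one_general (ka ℓ kv kp τ₀ : ℝ)
    (hka : ka > 1) (hτ₀ : 0 < τ₀)
    (γ : ℝ) :
    ∃ ω : ℝ, 0 < ω ∧ ∃ τ : ℝ, 0 < τ ∧ τ ≤ τ₀ ∧
      ‖-(ka : ℂ) * (ω : ℂ)^2 * Complex.exp (-(Complex.I * (ω : ℂ) * (ℓ : ℂ)))
          + Complex.I * (kv : ℂ) * (ω : ℂ) + (kp : ℂ)‖
        > ‖-(Complex.I * (τ : ℂ) * (ω : ℂ)^3) - (ω : ℂ)^2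
          + Complex.I * (γ : ℂ) * (ω : ℂ) + (kp : ℂ)‖ := by
  obtain ⟨ω, hω1, hdom⟩ :=
    exists_one_le_linear_lt_mul_sq (sub_pos.2 hka) (|kv| + |γ|) (2 * |kp| + τ₀)
  have hω : 0 < ω := by linarith
  set τ := τ₀ / ω ^ 3
  have hτ : 0 < τ := by positivity
  have hτω : τ * ω ^ 3 = τ₀ := div_mul_cancel₀ _ (by positivity)
  refine ⟨ω, hω, τ, hτ, div_le_self hτ₀.le (one_le_pow₀ hω1), ?_⟩
  have hnum := norm_delayed_numerator_ge ka kv kp ω ℓ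
  have hden := norm_denominator_le τ γ kp ω
  rw [abs_of_pos (by linarith : 0 < ka), abs_of_pos hω] at hnum
  rw [abs_of_pos hτ, abs_of_pos hω, hτω] at hden
  linarith

theorem string_stability_fails_ka_gt_one (ka ℓ kv kp hw τ₀ : ℝ)
    (hka : ka > 1) (hℓ : 0 < ℓ) (hkv : 0 < kv) (hkp : 0 < kp) (hhw : 0 < hw) (hτ₀ : 0 < τ₀)
    (γ : ℝ) (hγ : γ = kv + hw * kp) (hint : γ - τ₀ * kp > 0) :
    ∃ ω : ℝ, 0 < ω ∧ ∃ τ : ℝ, 0 < τ ∧ τ ≤ τ₀ ∧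
      ‖-(ka : ℂ) * (ω : ℂ)^2 * Complex.exp (-(Complex.I * (ω : ℂ) * (ℓ : ℂ)))
          + Complex.I * (kv : ℂ) * (ω : ℂ) + (kp : ℂ)‖
        > ‖-(Complex.I * (τ : ℂ) * (ω : ℂ)^3) - (ω : ℂ)^2
          + Complex.I * (γ : ℂ) * (ω : ℂ) + (kp : ℂ)‖ :=
  string_stability_fails_ka_gt_one_general ka ℓ kv kp τ₀ hka hτ₀ γ
end

section
/- Let k_a = 1, ℓ > 0, and let k_v, k_p, h_w, τ₀ be positive real numbers with γ := k_v + h_w k_p. Then there exist ω > 0 and τ ∈ (0, τ₀] such that |−ω² e^{−iωℓ} + i k_v ω + k_p| > |−iτω³ − ω² + iγω + k_p|. -/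
theorem string_stability_fails_ka_eq_one (ℓ kv kp hw τ₀ : ℝ)
    (hℓ : 0 < ℓ) (hkv : 0 < kv) (hkp : 0 < kp) (hhw : 0 < hw) (hτ₀ : 0 < τ₀)
    (γ : ℝ) (hγ : γ = kv + hw * kp) :
    ∃ ω : ℝ, 0 < ω ∧ ∃ τ : ℝ, 0 < τ ∧ τ ≤ τ₀ ∧
      ‖(-(ω : ℂ)^2 * Complex.exp (-(Complex.I * (ω : ℂ) * (ℓ : ℂ)))
          + Complex.I * (kv : ℂ) * (ω : ℂ) + (kp : ℂ))‖
        > ‖(-(Complex.I * (τ : ℂ) * (ω : ℂ)^3) - (ω : ℂ)^2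
          + Complex.I * (γ : ℂ) * (ω : ℂ) + (kp : ℂ))‖ := by
  have hγpos : 0 < γ := by nlinarith
  have hπ := Real.pi_pos
  obtain ⟨n, hn⟩ := exists_nat_gt (Real.sqrt (γ / τ₀) * ℓ / Real.pi)
  set ω : ℝ := (2 * (n : ℝ) + 1) * Real.pi / ℓ with hωdef
  have hωpos : 0 < ω := by
    apply div_pos _ hℓ
    positivity
  have hsqrt_nonneg : 0 ≤ Real.sqrt (γ / τ₀) := Real.sqrt_nonneg _
  have hωgt : Real.sqrt (γ / τ₀) < ω := by
    rw [div_lt_iff₀ hπ] at hn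
    rw [hωdef, lt_div_iff₀ hℓ]
    nlinarith
  have hω2 : γ / τ₀ < ω ^ 2 := by
    have := Real.sq_sqrt (le_of_lt (div_pos hγpos hτ₀))
    nlinarith
  refine ⟨ω, hωpos, γ / ω ^ 2, div_pos hγpos (by positivity), ?_, ?_⟩
  · rw [div_le_iff₀ (by positivity)]
    rw [div_lt_iff₀ hτ₀] at hω2
    nlinarith
  · -- compute the exponential
    have hωℓ : ω * ℓ = 2 * (n : ℝ) * Real.pi + Real.pi := by
      rw [hωdef, div_mul_cancel₀ _ hℓ.ne']; ring
    have hexp : Complex.exp (-(Complex.I * (ω : ℂ) * (ℓ : ℂ))) = -1 := by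
      have : -(Complex.I * (ω : ℂ) * (ℓ : ℂ))
          = ((-(ω * ℓ) : ℝ) : ℂ) * Complex.I := by
        push_cast; ring
      rw [this, Complex.exp_mul_I]
      rw [← Complex.ofReal_cos, ← Complex.ofReal_sin]
      rw [Real.cos_neg, Real.sin_neg, hωℓ]
      have hc : Real.cos (2 * (n : ℝ) * Real.pi + Real.pi) = -1 := by
        rw [Real.cos_add, Real.cos_pi, Real.sin_pi]
        have h2 : 2 * (n : ℝ) * Real.pi = (n : ℝ) * (2 * Real.pi) := by ring
        rw [h2, Real.cos_nat_mul_two_pi]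
        ring
      have hs : Real.sin (2 * (n : ℝ) * Real.pi + Real.pi) = 0 := by
        have : 2 * (n : ℝ) * Real.pi + Real.pi = ((2 * n + 1 : ℤ) : ℝ) * Real.pi := by
          push_cast; ring
        rw [this, Real.sin_int_mul_pi]
      rw [hc, hs]
      simp
    rw [hexp]
    have hLHS : (-(ω : ℂ)^2 * (-1) + Complex.I * (kv : ℂ) * (ω : ℂ) + (kp : ℂ))
        = ((ω ^ 2 + kp : ℝ) : ℂ) + ((kv * ω : ℝ) : ℂ) * Complex.I := by
      push_cast; ring
    have hRHS : (-(Complex.I * ((γ / ω ^ 2 : ℝ) : ℂ) * (ω : ℂ)^3) - (ω : ℂ)^2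
          + Complex.I * (γ : ℂ) * (ω : ℂ) + (kp : ℂ))
        = ((kp - ω ^ 2 : ℝ) : ℂ) := by
      have hω2ne : (ω : ℂ) ^ 2 ≠ 0 := by
        simp [pow_ne_zero_iff, Complex.ofReal_ne_zero, ne_of_gt hωpos]
      push_cast
      field_simp
      ring
    rw [hLHS, hRHS, Complex.norm_add_mul_I, Complex.norm_real, Real.norm_eq_abs]
    have h1 : |kp - ω ^ 2| = Real.sqrt ((kp - ω ^ 2) ^ 2) := by
      rw [Real.sqrt_sq_eq_abs]
    rw [h1]
    apply Real.sqrt_lt_sqrt (sq_nonneg _)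
    nlinarith [sq_nonneg (kv * ω), mul_pos hkp (mul_pos hωpos hωpos)]
end

section
/- Let ℓ > 0 and let k_a, k_v, k_p, h_w, τ₀ be positive real numbers with γ := k_v + h_w k_p satisfying γ − τ₀ k_p > 0. If for every τ ∈ (0, τ₀] and every ω ≥ 0 one has |−k_a ω² e^{−iωℓ} + i k_v ω + k_p| ≤ |−iτω³ − ω² + iγω + k_p|, then k_a < 1. -/
/-!
Pick a frequency ω at which the delay factor is `e^{-iωℓ} = -1` and a lag `τ = γ / ω²`, which
kills the imaginary part `(γ - τ ω²) ω` of the denominator. For ω large, `τ ≤ τ₀` and the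
inequality reads `k_a ω² + k_p ≤ |D₁(jω)| = ω² - k_p`, forcing `k_a < 1`.
-/

open Complex Real

lemma exists_gt_exp_neg_I_mul_eq_neg_one {ℓ : ℝ} (hℓ : 0 < ℓ) (B : ℝ) :
    ∃ ω : ℝ, B < ω ∧ exp (-(I * ω * ℓ)) = -1 := by
  obtain ⟨n, hn⟩ := exists_nat_gt (B * ℓ / π)
  refine ⟨(2 * n + 1) * π / ℓ, ?_, ?_⟩
  · rw [lt_div_iff₀ hℓ]
    rw [div_lt_iff₀ pi_pos] at hn
    nlinarith [pi_pos]
  · have hphase : -(I * ((2 * n + 1) * π / ℓ : ℝ) * ℓ)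
        = (-(n : ℤ) - 1 : ℤ) * (2 * π * I) + π * I := by
      have hℓ' : (ℓ : ℂ) ≠ 0 := ofReal_ne_zero.mpr hℓ.ne'
      push_cast
      field_simp
      ring
    rw [hphase, Complex.exp_add, exp_int_mul_two_pi_mul_I, exp_pi_mul_I, one_mul]

lemma add_le_norm_of_exp_eq_neg_one {ka kv kp ω ℓ : ℝ} (he : exp (-(I * ω * ℓ)) = -1) :
    ka * ω ^ 2 + kp ≤ ‖-(ka : ℂ) * ω ^ 2 * exp (-(I * ω * ℓ)) + I * kv * ω + kp‖ := by
  have hre : (-(ka : ℂ) * ω ^ 2 * exp (-(I * ω * ℓ)) + I * kv * ω + kp).re = ka * ω ^ 2 + kp := by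
    rw [he]
    simp [← ofReal_pow]
  exact hre ▸ re_le_norm _

lemma norm_eq_sub_of_mul_sq_eq {τ ω γ kp : ℝ} (hτ : τ * ω ^ 2 = γ) (hω : kp ≤ ω ^ 2) :
    ‖-(I * τ * ω ^ 3) - ω ^ 2 + I * γ * ω + kp‖ = ω ^ 2 - kp := by
  have hreal : -(I * τ * ω ^ 3) - ω ^ 2 + I * γ * ω + kp = ((kp - ω ^ 2 : ℝ) : ℂ) := by
    rw [← hτ]
    push_cast
    ring
  rw [hreal, norm_real, Real.norm_eq_abs, abs_of_nonpos (by linarith)]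
  ring

theorem string_stability_implies_ka_lt_one_general (ka ℓ kv kp τ₀ : ℝ)
    (hℓ : 0 < ℓ) (hkp : 0 < kp) (hτ₀ : 0 < τ₀)
    (γ : ℝ) (hint : γ - τ₀ * kp > 0)
    (hss : ∀ τ : ℝ, 0 < τ → τ ≤ τ₀ → ∀ ω : ℝ, 0 ≤ ω →
      ‖(-(ka : ℂ) * (ω : ℂ)^2 * Complex.exp (-(Complex.I * (ω : ℂ) * (ℓ : ℂ)))
          + Complex.I * (kv : ℂ) * (ω : ℂ) + (kp : ℂ))‖
        ≤ ‖(-(Complex.I * (τ : ℂ) * (ω : ℂ)^3) - (ω : ℂ)^2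
          + Complex.I * (γ : ℂ) * (ω : ℂ) + (kp : ℂ))‖) :
    ka < 1 := by
  have hγ : 0 < γ := by nlinarith
  obtain ⟨ω, hωB, he⟩ := exists_gt_exp_neg_I_mul_eq_neg_one hℓ (max 1 (max (γ / τ₀) kp))
  simp only [max_lt_iff] at hωB
  obtain ⟨hω1, hωγ, hωkp⟩ := hωB
  have hω2γ : γ ≤ τ₀ * ω ^ 2 := by
    rw [div_lt_iff₀ hτ₀] at hωγ
    nlinarith
  have hω2kp : kp < ω ^ 2 := by nlinarith
  have hτ : γ / ω ^ 2 * ω ^ 2 = γ := div_mul_cancel₀ γ (by positivity)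
  have hbound := (add_le_norm_of_exp_eq_neg_one he).trans
    (hss (γ / ω ^ 2) (by positivity) (div_le_of_le_mul₀ (by positivity) hτ₀.le hω2γ) ω (by linarith))
  rw [norm_eq_sub_of_mul_sq_eq hτ hω2kp.le] at hbound
  nlinarith

theorem string_stability_implies_ka_lt_one (ka ℓ kv kp hw τ₀ : ℝ)
    (hℓ : 0 < ℓ) (hka : 0 < ka) (hkv : 0 < kv) (hkp : 0 < kp) (hhw : 0 < hw) (hτ₀ : 0 < τ₀)
    (γ : ℝ) (hγ : γ = kv + hw * kp) (hint : γ - τ₀ * kp > 0)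
    (hss : ∀ τ : ℝ, 0 < τ → τ ≤ τ₀ → ∀ ω : ℝ, 0 ≤ ω →
      ‖(-(ka : ℂ) * (ω : ℂ)^2 * Complex.exp (-(Complex.I * (ω : ℂ) * (ℓ : ℂ)))
          + Complex.I * (kv : ℂ) * (ω : ℂ) + (kp : ℂ))‖
        ≤ ‖(-(Complex.I * (τ : ℂ) * (ω : ℂ)^3) - (ω : ℂ)^2
          + Complex.I * (γ : ℂ) * (ω : ℂ) + (kp : ℂ))‖) :
    ka < 1 :=
  string_stability_implies_ka_lt_one_general ka ℓ kv kp τ₀ hℓ hkp hτ₀ γ hint hss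
end

section
/- Let k_a ∈ (0,1), let k_v, k_p, τ be positive reals, ℓ ≥ 0, h_w > 0, and set γ = k_v + h_w k_p. If 1 − 2τγ − k_a² − 2 k_a k_v ℓ − k_a k_p ℓ² ≥ 0 and γ² ≥ 2 k_p (1 − k_a) + k_v², then for every ω ≥ 0, |−iτω³ − ω² + iγω + k_p|² − |−k_a ω² e^{−iωℓ} + i k_v ω + k_p|² ≥ 0. -/
theorem string_stability_sufficiency (ka kv kp τ ℓ hw : ℝ)
    (hka : 0 < ka) (hka1 : ka < 1) (hkv : 0 < kv) (hkp : 0 < kp) (hτ : 0 < τ)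
    (hℓ : 0 ≤ ℓ) (hhw : 0 < hw)
    (γ : ℝ) (hγ : γ = kv + hw * kp)
    (h1 : 1 - 2 * τ * γ - ka^2 - 2 * ka * kv * ℓ - ka * kp * ℓ^2 ≥ 0)
    (h2 : γ^2 ≥ 2 * kp * (1 - ka) + kv^2) :
    ∀ ω : ℝ, 0 ≤ ω →
      ‖-(Complex.I * (τ : ℂ) * (ω : ℂ)^3) - (ω : ℂ)^2
          + Complex.I * (γ : ℂ) * (ω : ℂ) + (kp : ℂ)‖ ^ 2
        - ‖-(ka : ℂ) * (ω : ℂ)^2 * Complex.exp (-(Complex.I * (ω : ℂ) * (ℓ : ℂ)))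
          + Complex.I * (kv : ℂ) * (ω : ℂ) + (kp : ℂ)‖ ^ 2 ≥ 0 := by
  intro ω hω
  set c := Real.cos (ω * ℓ) with hc
  set s := Real.sin (ω * ℓ) with hs
  have hexp : Complex.exp (-(Complex.I * (ω : ℂ) * (ℓ : ℂ)))
      = (c : ℂ) - (s : ℂ) * Complex.I := by
    rw [show -(Complex.I * (ω : ℂ) * (ℓ : ℂ)) = ((-(ω * ℓ) : ℝ) : ℂ) * Complex.I by
      push_cast; ring]
    rw [Complex.exp_mul_I, ← Complex.ofReal_cos, ← Complex.ofReal_sin,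
      Real.cos_neg, Real.sin_neg, ← hc, ← hs]
    push_cast
    ring
  rw [hexp, Complex.sq_norm, Complex.sq_norm]
  simp only [Complex.normSq_apply, Complex.add_re, Complex.add_im, Complex.sub_re,
    Complex.sub_im, Complex.neg_re, Complex.neg_im, Complex.mul_re, Complex.mul_im,
    Complex.I_re, Complex.I_im, Complex.ofReal_re, Complex.ofReal_im]
  have hωl : 0 ≤ ω * ℓ := mul_nonneg hω hℓ
  have hcos : 1 - (ω * ℓ) ^ 2 / 2 ≤ c := Real.one_sub_sq_div_two_le_cos
  have hsin : s ≤ ω * ℓ := Real.sin_le hωl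
  have hre2 : ((ω : ℂ) ^ 2).re = ω ^ 2 := by
    rw [← Complex.ofReal_pow, Complex.ofReal_re]
  have him2 : ((ω : ℂ) ^ 2).im = 0 := by
    rw [← Complex.ofReal_pow, Complex.ofReal_im]
  have hre3 : ((ω : ℂ) ^ 3).re = ω ^ 3 := by
    rw [← Complex.ofReal_pow, Complex.ofReal_re]
  have him3 : ((ω : ℂ) ^ 3).im = 0 := by
    rw [← Complex.ofReal_pow, Complex.ofReal_im]
  rw [hre2, him2, hre3, him3]
  have hpyth : s ^ 2 + c ^ 2 = 1 := Real.sin_sq_add_cos_sq (ω * ℓ)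
  have hp : ω ^ 4 * ka ^ 2 * c ^ 2 + ω ^ 4 * ka ^ 2 * s ^ 2 = ω ^ 4 * ka ^ 2 := by
    linear_combination (ω ^ 4 * ka ^ 2) * hpyth
  ring_nf
  nlinarith [mul_le_mul_of_nonneg_left hcos (mul_nonneg (mul_nonneg (le_of_lt hkp) hka.le) (pow_nonneg hω 2)),
    mul_le_mul_of_nonneg_left hsin (mul_nonneg (mul_nonneg (le_of_lt hkv) hka.le) (pow_nonneg hω 3)),
    mul_le_mul_of_nonneg_left h1 (pow_nonneg hω 4),
    mul_le_mul_of_nonneg_left h2 (pow_nonneg hω 2),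
    sq_nonneg (τ * ω^3), pow_nonneg hω 2, pow_nonneg hω 4, hp]
end

section
/- Let k_a ∈ (0,1), τ₀ > 0, ℓ ≥ 0, and let k_v, k_p > 0 with h_w ≥ ℓ/2 and γ := k_v + h_w k_p ≤ (1 − k_a²)/(2τ₀ + 2 k_a ℓ). Then for every τ ∈ (0, τ₀], 1 − 2τγ − k_a² − 2 k_a k_v ℓ − k_a k_p ℓ² ≥ 0. -/
theorem condition_a_from_gamma_bound (ka τ₀ ℓ kv kp hw : ℝ)
    (hka : 0 < ka) (hka1 : ka < 1) (hτ₀ : 0 < τ₀) (hℓ : 0 ≤ ℓ)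
    (hkv : 0 < kv) (hkp : 0 < kp) (hhw : hw ≥ ℓ / 2)
    (γ : ℝ) (hγ : γ = kv + hw * kp)
    (hub : γ ≤ (1 - ka^2) / (2 * τ₀ + 2 * ka * ℓ)) :
    ∀ τ : ℝ, 0 < τ → τ ≤ τ₀ →
      1 - 2 * τ * γ - ka^2 - 2 * ka * kv * ℓ - ka * kp * ℓ^2 ≥ 0 := by
  intro τ hτ hττ₀
  have hden : 0 < 2 * τ₀ + 2 * ka * ℓ := by positivity
  have hub' : γ * (2 * τ₀ + 2 * ka * ℓ) ≤ 1 - ka^2 := by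
    have := (le_div_iff₀ hden).mp hub
    linarith
  have hγpos : 0 < γ := by nlinarith
  nlinarith [mul_nonneg (sub_nonneg.mpr hττ₀) hγpos.le,
    mul_nonneg (mul_nonneg hka.le hkp.le) (mul_nonneg hℓ (by linarith : (0:ℝ) ≤ hw - ℓ/2))]
end

section
/- Let k_a ∈ (0,1), τ₀ > 0, ℓ ≥ 0, and h_w > 2(τ₀ + k_a ℓ)/(1 + k_a). Set a₁ = (1 − k_a)/h_w, b₁ = 2(1 − k_a)/h_w², a₂ = (1 − k_a²)/(2(τ₀ + k_a ℓ)), b₂ = (1 − k_a²)/(2(τ₀ + k_a ℓ) h_w). Then the 2×2 linear system k_v/a₁ + k_p/b₁ = 1, k_v/a₂ + k_p/b₂ = 1 has the unique solution k_v = a₁a₂(b₁ − b₂)/(a₂b₁ − a₁b₂), k_p = b₁b₂(a₂ − a₁)/(a₂b₁ − a₁b₂), and this solution satisfies k_p > 0. -/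
theorem gain_lines_intersection (ka τ₀ ℓ hw a₁ b₁ a₂ b₂ : ℝ)
    (hka : 0 < ka) (hka1 : ka < 1) (hτ₀ : 0 < τ₀) (hℓ : 0 ≤ ℓ)
    (hhw : hw > 2 * (τ₀ + ka * ℓ) / (1 + ka))
    (ha₁ : a₁ = (1 - ka) / hw)
    (hb₁ : b₁ = 2 * (1 - ka) / hw^2)
    (ha₂ : a₂ = (1 - ka^2) / (2 * (τ₀ + ka * ℓ)))
    (hb₂ : b₂ = (1 - ka^2) / (2 * (τ₀ + ka * ℓ) * hw)) :
    (a₁ * a₂ * (b₁ - b₂) / (a₂ * b₁ - a₁ * b₂)) / a₁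
        + (b₁ * b₂ * (a₂ - a₁) / (a₂ * b₁ - a₁ * b₂)) / b₁ = 1
    ∧ (a₁ * a₂ * (b₁ - b₂) / (a₂ * b₁ - a₁ * b₂)) / a₂
        + (b₁ * b₂ * (a₂ - a₁) / (a₂ * b₁ - a₁ * b₂)) / b₂ = 1
    ∧ (∀ kv kp : ℝ, kv / a₁ + kp / b₁ = 1 → kv / a₂ + kp / b₂ = 1 →
        kv = a₁ * a₂ * (b₁ - b₂) / (a₂ * b₁ - a₁ * b₂)
        ∧ kp = b₁ * b₂ * (a₂ - a₁) / (a₂ * b₁ - a₁ * b₂))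
    ∧ b₁ * b₂ * (a₂ - a₁) / (a₂ * b₁ - a₁ * b₂) > 0 := by
  have ht : 0 < τ₀ + ka * ℓ := by positivity
  have hka1' : (0:ℝ) < 1 - ka := by linarith
  have hka2 : (0:ℝ) < 1 - ka^2 := by nlinarith
  have h1ka : (0:ℝ) < 1 + ka := by linarith
  have hhw0 : 0 < hw := lt_trans (by positivity) hhw
  have ha₁p : 0 < a₁ := by rw [ha₁]; positivity
  have hb₁p : 0 < b₁ := by rw [hb₁]; positivity
  have ha₂p : 0 < a₂ := by rw [ha₂]; positivity
  have hb₂p : 0 < b₂ := by rw [hb₂]; positivity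
  have hhw' : 2 * (τ₀ + ka * ℓ) < hw * (1 + ka) := by
    rw [gt_iff_lt, div_lt_iff₀ h1ka] at hhw; linarith
  have hDeq : a₂ * b₁ - a₁ * b₂ = (1 - ka) * (1 - ka^2) / (2 * (τ₀ + ka * ℓ) * hw^2) := by
    rw [ha₁, hb₁, ha₂, hb₂]; field_simp; ring
  have hD : 0 < a₂ * b₁ - a₁ * b₂ := by rw [hDeq]; positivity
  have ha12 : a₁ < a₂ := by
    rw [ha₁, ha₂, div_lt_div_iff₀ hhw0 (by positivity)]
    nlinarith
  refine ⟨?_, ?_, ?_, ?_⟩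
  · field_simp
    ring
  · field_simp
    ring
  · intro kv kp h1 h2
    rw [div_add_div _ _ ha₁p.ne' hb₁p.ne', div_eq_one_iff_eq (by positivity)] at h1
    rw [div_add_div _ _ ha₂p.ne' hb₂p.ne', div_eq_one_iff_eq (by positivity)] at h2
    constructor
    · rw [eq_div_iff hD.ne']; linear_combination a₂ * h1 - a₁ * h2
    · rw [eq_div_iff hD.ne']; linear_combination b₁ * h2 - b₂ * h1
  · exact div_pos (mul_pos (mul_pos hb₁p hb₂p) (sub_pos.2 ha12)) hD
end

section
/- Let k_a ∈ (0,1), τ₀ > 0, ℓ ≥ 0, and suppose h_w > 2(τ₀ + k_a ℓ)/(1 + k_a). Then there exist k_v > 0 and k_p > 0 such that 2 k_p (1 − k_a) + k_v² ≤ (k_v + h_w k_p)² and k_v + h_w k_p ≤ (1 − k_a²)/(2(τ₀ + k_a ℓ)). -/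
theorem feasible_gains_exist (ka τ₀ ℓ hw : ℝ)
    (hka : 0 < ka) (hka1 : ka < 1) (hτ₀ : 0 < τ₀) (hℓ : 0 ≤ ℓ)
    (hhw : hw > 2 * (τ₀ + ka * ℓ) / (1 + ka)) :
    ∃ kv kp : ℝ, 0 < kv ∧ 0 < kp ∧
      2 * kp * (1 - ka) + kv^2 ≤ (kv + hw * kp)^2 ∧
      kv + hw * kp ≤ (1 - ka^2) / (2 * (τ₀ + ka * ℓ)) := by
  have hD : 0 < 2 * (τ₀ + ka * ℓ) := by positivity
  have hka' : 0 < 1 + ka := by linarith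
  have hhw0 : 0 < hw := lt_of_le_of_lt (by positivity) hhw
  set B : ℝ := (1 - ka^2) / (2 * (τ₀ + ka * ℓ)) with hB
  have hkey : 1 - ka < hw * B := by
    rw [hB]
    rw [gt_iff_lt, div_lt_iff₀ hka'] at hhw
    rw [← mul_div_assoc, lt_div_iff₀ hD]
    nlinarith
  have hka0 : 0 < 1 - ka := by linarith
  refine ⟨(1 - ka)/hw, (hw*B - (1 - ka))/hw^2,
    div_pos hka0 hhw0, div_pos (by linarith) (by positivity), ?_, ?_⟩
  · have h1 : (1 - ka)/hw + hw * ((hw*B - (1 - ka))/hw^2) = B := by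
      field_simp; ring
    rw [h1]
    have h2 : 2 * ((hw*B - (1 - ka))/hw^2) * (1 - ka) + ((1 - ka)/hw)^2
        = (2*(hw*B - (1 - ka))*(1 - ka) + (1 - ka)^2) / hw^2 := by
      field_simp
    rw [h2, div_le_iff₀ (by positivity : (0:ℝ) < hw^2)]
    nlinarith [sq_nonneg (hw*B - (1 - ka))]
  · have h1 : (1 - ka)/hw + hw * ((hw*B - (1 - ka))/hw^2) = B := by
      field_simp; ring
    rw [h1]
end

section
/- Let k_a ∈ (0,1), τ₀ > 0, ℓ > 0, η > 0, and set h_w = max{ 2(τ₀ + k_a ℓ)/(1 + k_a), ℓ/2 }·(1 + η). Then there exist k_v > 0 and k_p > 0 such that, with γ := k_v + h_w k_p, one has γ > τ₀ k_p and, for every τ ∈ (0, τ₀] and every ω ≥ 0, |−k_a ω² e^{−iωℓ} + i k_v ω + k_p| ≤ |−iτω³ − ω² + iγω + k_p|. -/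
set_option maxHeartbeats 1600000 in
theorem cacc_theorem_part_b (ka τ₀ ℓ η hw : ℝ)
    (hka : 0 < ka) (hka1 : ka < 1) (hτ₀ : 0 < τ₀) (hℓ : 0 < ℓ) (hη : 0 < η)
    (hhw : hw = max (2 * (τ₀ + ka * ℓ) / (1 + ka)) (ℓ / 2) * (1 + η)) :
    ∃ kv kp : ℝ, 0 < kv ∧ 0 < kp ∧
      kv + hw * kp > τ₀ * kp ∧
      ∀ τ : ℝ, 0 < τ → τ ≤ τ₀ → ∀ ω : ℝ, 0 ≤ ω →
        ‖-(ka : ℂ) * (ω : ℂ)^2 * Complex.exp (-(Complex.I * (ω : ℂ) * (ℓ : ℂ)))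
            + Complex.I * (kv : ℂ) * (ω : ℂ) + (kp : ℂ)‖
          ≤ ‖-(Complex.I * (τ : ℂ) * (ω : ℂ)^3) - (ω : ℂ)^2
            + Complex.I * ((kv + hw * kp : ℝ) : ℂ) * (ω : ℂ) + (kp : ℂ)‖ := by
  have hka' : (0:ℝ) < 1 + ka := by linarith
  have hη' : (0:ℝ) < 1 + η := by linarith
  have hM : (0:ℝ) < 2 * (τ₀ + ka * ℓ) / (1 + ka) := by positivity
  -- hw bounds
  have hhw_ge : 2 * (τ₀ + ka * ℓ) / (1 + ka) * (1 + η) ≤ hw := by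
    rw [hhw]
    have := le_max_left (2 * (τ₀ + ka * ℓ) / (1 + ka)) (ℓ / 2)
    nlinarith
  have hhw_pos : 0 < hw := lt_of_lt_of_le (by positivity) hhw_ge
  -- key: (τ₀ + ka*ℓ) ≤ hw * (1+ka) / (2*(1+η))
  have hkey : 2 * (τ₀ + ka * ℓ) * (1 + η) ≤ hw * (1 + ka) := by
    have := hhw_ge
    rw [div_mul_eq_mul_div, div_le_iff₀ hka'] at this
    linarith
  set kv : ℝ := (1 - ka) * (2 + η) / (2 * hw) with hkv_def
  set kp : ℝ := (1 - ka^2) * η / (2 * (1 + η) * (ka * ℓ^2 + 1)) with hkp_def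
  have hkv : 0 < kv := by
    apply div_pos
    · nlinarith
    · linarith
  have hka2 : (0:ℝ) < 1 - ka^2 := by nlinarith
  have hkp : 0 < kp := div_pos (mul_pos hka2 hη) (by positivity)
  have hkvhw : kv * hw = (1 - ka) * (2 + η) / 2 := by
    rw [hkv_def, div_mul_eq_mul_div, div_eq_div_iff (by positivity) (by positivity)]
    ring
  -- hw > τ₀
  have hhw_gt : τ₀ < hw := by
    have : τ₀ + ka * ℓ ≤ hw * (1 + ka) / (2 * (1 + η)) := by
      rw [le_div_iff₀ (by positivity)]; linarith
    nlinarith [mul_pos hka hℓ]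
  refine ⟨kv, kp, hkv, hkp, by nlinarith, ?_⟩
  -- the constant K step facts
  have hG1 : 0 ≤ kp * (kv * hw - (1 - ka)) := by
    apply mul_nonneg hkp.le
    rw [hkvhw]; nlinarith
  have hK : 0 ≤ (1 - ka^2) - 2 * kv * (τ₀ + ka * ℓ) - kp * ka * ℓ^2 := by
    have h1 : 2 * kv * (τ₀ + ka * ℓ) ≤ (1 - ka^2) * (2 + η) / (2 * (1 + η)) := by
      have h2 : 2 * kv * (τ₀ + ka * ℓ) * (2 * hw * (1 + η)) ≤
          (1 - ka^2) * (2 + η) / (2 * (1 + η)) * (2 * hw * (1 + η)) := by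
        have e1 : 2 * kv * (τ₀ + ka * ℓ) * (2 * hw * (1 + η)) =
            2 * (kv * hw) * (2 * (τ₀ + ka * ℓ) * (1 + η)) := by ring
        have e2 : (1 - ka^2) * (2 + η) / (2 * (1 + η)) * (2 * hw * (1 + η)) =
            (1 - ka) * (2 + η) * (hw * (1 + ka)) := by
          field_simp; ring
        rw [e1, e2, hkvhw]
        have hpos : 0 ≤ (1 - ka) * (2 + η) := by nlinarith
        calc 2 * ((1 - ka) * (2 + η) / 2) * (2 * (τ₀ + ka * ℓ) * (1 + η))
            = (1 - ka) * (2 + η) * (2 * (τ₀ + ka * ℓ) * (1 + η)) := by ring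
          _ ≤ (1 - ka) * (2 + η) * (hw * (1 + ka)) := by
              apply mul_le_mul_of_nonneg_left hkey hpos
      exact le_of_mul_le_mul_right h2 (by positivity)
    have h3 : kp * ka * ℓ^2 ≤ (1 - ka^2) * η / (2 * (1 + η)) := by
      rw [hkp_def]
      rw [div_mul_eq_mul_div, div_mul_eq_mul_div, div_le_div_iff₀ (by positivity) (by positivity)]
      nlinarith [mul_pos (mul_pos hka2 hη) hη', mul_nonneg hka.le (sq_nonneg ℓ),
        mul_pos (mul_pos (mul_pos hka2 hη) hη') (mul_pos hka (pow_pos hℓ 2))]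
    have h4 : (1 - ka^2) * (2 + η) / (2 * (1 + η)) + (1 - ka^2) * η / (2 * (1 + η)) = (1 - ka^2) := by
      field_simp
      ring
    linarith
  intro τ hτ hττ₀ ω hω
  -- set up trig
  set c : ℝ := Real.cos (ω * ℓ) with hc_def
  set s : ℝ := Real.sin (ω * ℓ) with hs_def
  have hpyth : s^2 + c^2 = 1 := Real.sin_sq_add_cos_sq (ω * ℓ)
  have hsb : s ≤ ω * ℓ := Real.sin_le (by positivity)
  have hcb : 1 - (ω * ℓ)^2/2 ≤ c := Real.one_sub_sq_div_two_le_cos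
  -- rewrite complex expressions
  have hexp : Complex.exp (-(Complex.I * (ω : ℂ) * (ℓ : ℂ))) =
      (c : ℂ) - (s : ℂ) * Complex.I := by
    have : -(Complex.I * (ω : ℂ) * (ℓ : ℂ)) = ((-(ω * ℓ) : ℝ) : ℂ) * Complex.I := by
      push_cast; ring
    rw [this, Complex.exp_mul_I]
    push_cast [Real.cos_neg, Real.sin_neg]
    simp [hc_def, hs_def]
    ring
  have hL : (-(ka : ℂ) * (ω : ℂ)^2 * Complex.exp (-(Complex.I * (ω : ℂ) * (ℓ : ℂ)))
      + Complex.I * (kv : ℂ) * (ω : ℂ) + (kp : ℂ))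
      = ((kp - ka * ω^2 * c : ℝ) : ℂ) + ((kv * ω + ka * ω^2 * s : ℝ) : ℂ) * Complex.I := by
    rw [hexp]; push_cast; ring
  have hR : (-(Complex.I * (τ : ℂ) * (ω : ℂ)^3) - (ω : ℂ)^2
      + Complex.I * ((kv + hw * kp : ℝ) : ℂ) * (ω : ℂ) + (kp : ℂ))
      = ((kp - ω^2 : ℝ) : ℂ) + (((kv + hw * kp) * ω - τ * ω^3 : ℝ) : ℂ) * Complex.I := by
    push_cast; ring
  rw [hL, hR, Complex.norm_add_mul_I, Complex.norm_add_mul_I]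
  apply Real.sqrt_le_sqrt
  -- the real inequality
  have hF : 0 ≤ (hw * kp - τ * ω^2)^2 + (1 - ka^2) * ω^2 + 2 * kv * (hw * kp - τ * ω^2)
      - 2 * kv * ka * ω * s + 2 * kp * (ka * c - 1) := by
    linarith [sq_nonneg (hw * kp - τ * ω^2),
      mul_nonneg (mul_nonneg hkv.le (sub_nonneg.2 hττ₀)) (sq_nonneg ω),
      mul_nonneg (mul_nonneg (mul_nonneg hkv.le hka.le) hω) (sub_nonneg.2 hsb),
      mul_nonneg (mul_nonneg hkp.le hka.le) (sub_nonneg.2 hcb),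
      mul_nonneg hK (sq_nonneg ω), hG1]
  have hid : (kp - ω^2)^2 + ((kv + hw * kp) * ω - τ * ω^3)^2
      - ((kp - ka * ω^2 * c)^2 + (kv * ω + ka * ω^2 * s)^2)
      = ω^2 * ((hw * kp - τ * ω^2)^2 + (1 - ka^2) * ω^2 + 2 * kv * (hw * kp - τ * ω^2)
        - 2 * kv * ka * ω * s + 2 * kp * (ka * c - 1)) := by
    linear_combination (-(ka^2 * ω^4)) * hpyth
  linarith [mul_nonneg (sq_nonneg ω) hF, hid]
end

section
/- Let r be a positive integer, ℓ > 0, and let k_a, k_v, k_p, h_w, τ₀ be positive reals. Set k̄_a = r k_a, k̄_v = r k_v, k̄_p = r k_p, h̄_w = ((r+1)/2) h_w, and γ_r = k̄_v + h̄_w k̄_p, and assume γ_r − τ₀ k̄_p > 0. If for every τ ∈ (0, τ₀] and every ω ≥ 0 one has |−k̄_a ω² e^{−iωℓ} + i k̄_v ω + k̄_p| ≤ |−iτω³ − ω² + iγ_r ω + k̄_p|, then k̄_a < 1 (i.e. k_a < 1/r). -/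
set_option maxHeartbeats 1600000 in
theorem cacc_plus_theorem_part_a (r : ℕ) (hr : 0 < r) (ℓ ka kv kp hw τ₀ : ℝ)
    (hℓ : 0 < ℓ) (hka : 0 < ka) (hkv : 0 < kv) (hkp : 0 < kp) (hhw : 0 < hw) (hτ₀ : 0 < τ₀)
    (kabar kvbar kpbar hwbar γr : ℝ)
    (hkabar : kabar = r * ka) (hkvbar : kvbar = r * kv) (hkpbar : kpbar = r * kp)
    (hhwbar : hwbar = ((r + 1 : ℝ) / 2) * hw)
    (hγr : γr = kvbar + hwbar * kpbar)
    (hint : γr - τ₀ * kpbar > 0)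
    (hss : ∀ τ : ℝ, 0 < τ → τ ≤ τ₀ → ∀ ω : ℝ, 0 ≤ ω →
      ‖-(kabar : ℂ) * (ω : ℂ)^2 * Complex.exp (-(Complex.I * (ω : ℂ) * (ℓ : ℂ)))
          + Complex.I * (kvbar : ℂ) * (ω : ℂ) + (kpbar : ℂ)‖
        ≤ ‖-(Complex.I * (τ : ℂ) * (ω : ℂ)^3) - (ω : ℂ)^2
          + Complex.I * (γr : ℂ) * (ω : ℂ) + (kpbar : ℂ)‖) :
    kabar < 1 ∧ ka < 1 / r := by
  have hrR : (0 : ℝ) < (r : ℝ) := by exact_mod_cast hr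
  have hkpbar' : 0 < kpbar := by rw [hkpbar]; positivity
  have hkvbar' : 0 < kvbar := by rw [hkvbar]; positivity
  have hγr' : 0 < γr := by nlinarith
  have hmain : kabar < 1 := by
    by_contra h1
    push_neg at h1
    have hπ : (0:ℝ) < Real.pi := Real.pi_pos
    obtain ⟨B, hB⟩ : ∃ x : ℝ, x = Real.sqrt (γr / τ₀) + Real.sqrt kpbar + 1 := ⟨_, rfl⟩
    have hs1 : 0 ≤ Real.sqrt (γr / τ₀) := Real.sqrt_nonneg _
    have hs2 : 0 ≤ Real.sqrt kpbar := Real.sqrt_nonneg _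
    have hBpos : 0 < B := by rw [hB]; linarith
    obtain ⟨n, hnge⟩ : ∃ n : ℕ, B * ℓ / (2 * Real.pi) ≤ (n : ℝ) :=
      ⟨⌈B * ℓ / (2 * Real.pi)⌉₊, Nat.le_ceil _⟩
    obtain ⟨ω, hω⟩ : ∃ x : ℝ, x = 2 * Real.pi * n / ℓ := ⟨_, rfl⟩
    have hωB : B ≤ ω := by
      rw [hω, le_div_iff₀ hℓ]
      calc B * ℓ = (B * ℓ / (2 * Real.pi)) * (2 * Real.pi) := by field_simp
        _ ≤ (n : ℝ) * (2 * Real.pi) := by nlinarith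
        _ = 2 * Real.pi * n := by ring
    have hωpos : 0 < ω := lt_of_lt_of_le hBpos hωB
    have hω1 : Real.sqrt (γr / τ₀) ≤ ω := by rw [hB] at hωB; linarith
    have hω2 : Real.sqrt kpbar < ω := by rw [hB] at hωB; linarith
    have hωsq1 : γr / τ₀ ≤ ω ^ 2 := by
      have h := Real.sq_sqrt (le_of_lt (div_pos hγr' hτ₀))
      calc γr / τ₀ = Real.sqrt (γr / τ₀) ^ 2 := h.symm
        _ ≤ ω ^ 2 := pow_le_pow_left₀ hs1 hω1 2
    have hωsq2 : kpbar < ω ^ 2 := by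
      have h := Real.sq_sqrt hkpbar'.le
      calc kpbar = Real.sqrt kpbar ^ 2 := h.symm
        _ < ω ^ 2 := by
          apply pow_lt_pow_left₀ hω2 hs2
          norm_num
    obtain ⟨τ, hτ⟩ : ∃ x : ℝ, x = γr / ω ^ 2 := ⟨_, rfl⟩
    have hτpos : 0 < τ := by rw [hτ]; exact div_pos hγr' (by positivity)
    have hτle : τ ≤ τ₀ := by
      rw [hτ, div_le_iff₀ (by positivity : (0:ℝ) < ω ^ 2)]
      rw [div_le_iff₀ hτ₀] at hωsq1
      calc γr ≤ ω ^ 2 * τ₀ := hωsq1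
        _ = τ₀ * ω ^ 2 := by ring
    have key := hss τ hτpos hτle ω hωpos.le
    have hexp : Complex.exp (-(Complex.I * (ω : ℂ) * (ℓ : ℂ))) = 1 := by
      have harg : -(Complex.I * (ω : ℂ) * (ℓ : ℂ)) = ((-n : ℤ) : ℂ) * (2 * Real.pi * Complex.I) := by
        have hωc : (ω : ℂ) * (ℓ : ℂ) = 2 * Real.pi * n := by
          have hre : ω * ℓ = 2 * Real.pi * n := by rw [hω]; field_simp
          calc (ω : ℂ) * (ℓ : ℂ) = ((ω * ℓ : ℝ) : ℂ) := by push_cast; ring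
            _ = ((2 * Real.pi * n : ℝ) : ℂ) := by rw [hre]
            _ = 2 * Real.pi * n := by push_cast; ring
        have h' : Complex.I * (ω : ℂ) * (ℓ : ℂ) = Complex.I * ((ω : ℂ) * (ℓ : ℂ)) := by ring
        rw [h', hωc]; push_cast; ring
      rw [harg, Complex.exp_int_mul_two_pi_mul_I]
    rw [hexp] at key
    have hL : -(kabar : ℂ) * (ω : ℂ)^2 * 1 + Complex.I * (kvbar : ℂ) * (ω : ℂ) + (kpbar : ℂ)
        = ((kpbar - kabar * ω ^ 2 : ℝ) : ℂ) + ((kvbar * ω : ℝ) : ℂ) * Complex.I := by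
      push_cast; ring
    have hτω : τ * ω ^ 3 = γr * ω := by
      rw [hτ]; field_simp
    have hR : -(Complex.I * (τ : ℂ) * (ω : ℂ)^3) - (ω : ℂ)^2
        + Complex.I * (γr : ℂ) * (ω : ℂ) + (kpbar : ℂ)
        = ((kpbar - ω ^ 2 : ℝ) : ℂ) + ((γr * ω - τ * ω ^ 3 : ℝ) : ℂ) * Complex.I := by
      push_cast; ring
    rw [hL, hR, hτω, sub_self] at key
    have habsL : ‖((kpbar - kabar * ω ^ 2 : ℝ) : ℂ) + ((kvbar * ω : ℝ) : ℂ) * Complex.I‖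
        ^ 2 = (kpbar - kabar * ω ^ 2) ^ 2 + (kvbar * ω) ^ 2 := by
      rw [Complex.sq_norm, Complex.normSq_add_mul_I]
    have habsR : ‖((kpbar - ω ^ 2 : ℝ) : ℂ) + ((0 : ℝ) : ℂ) * Complex.I‖ ^ 2
        = (kpbar - ω ^ 2) ^ 2 := by
      rw [Complex.sq_norm, Complex.normSq_add_mul_I]; ring
    have key2 : (kpbar - kabar * ω ^ 2) ^ 2 + (kvbar * ω) ^ 2 ≤ (kpbar - ω ^ 2) ^ 2 := by
      rw [← habsL, ← habsR]
      exact pow_le_pow_left₀ (norm_nonneg _) key 2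
    have h3 : ω ^ 2 ≤ kabar * ω ^ 2 := by
      have := mul_le_mul_of_nonneg_right h1 (sq_nonneg ω)
      linarith [this]
    have h4 : (ω ^ 2 - kpbar) ^ 2 ≤ (kabar * ω ^ 2 - kpbar) ^ 2 :=
      pow_le_pow_left₀ (by linarith) (by linarith) 2
    have h5 : 0 < kvbar * ω := mul_pos hkvbar' hωpos
    have h6 : (kpbar - kabar * ω ^ 2) ^ 2 = (kabar * ω ^ 2 - kpbar) ^ 2 := by ring
    have h7 : (kpbar - ω ^ 2) ^ 2 = (ω ^ 2 - kpbar) ^ 2 := by ring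
    linarith [key2, h4, pow_pos h5 2]
  refine ⟨hmain, ?_⟩
  rw [lt_div_iff₀ hrR]
  calc ka * r = kabar := by rw [hkabar]; ring
    _ < 1 := hmain
end

section
/- Let r be a positive integer, τ₀ > 0, ℓ > 0, η_r > 0, and let k̄_a ∈ (0,1). Set h̄_w = (2(τ₀ + k̄_a ℓ)/(1 + k̄_a))·(1 + η_r). Then there exist k̄_v > 0 and k̄_p > 0 such that, with γ_r := k̄_v + h̄_w k̄_p, one has γ_r > τ₀ k̄_p and, for every τ ∈ (0, τ₀] and every ω ≥ 0, both |−k̄_a ω² e^{−iωℓ} + i k̄_v ω + k̄_p| ≤ |−iτω³ − ω² + iγ_r ω + k̄_p| and |e^{−iωℓ}(−k̄_a ω² + i k̄_v ω + k̄_p)| ≤ |−iτω³ − ω² + iγ_r ω + k̄_p|. -/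
set_option maxHeartbeats 1000000 in
lemma exists_vp (τ₀ ℓ ηr a h : ℝ) (hτ₀ : 0 < τ₀) (hℓ : 0 < ℓ) (hηr : 0 < ηr)
    (ha : 0 < a) (ha1 : a < 1)
    (hh : h = (2 * (τ₀ + a * ℓ) / (1 + a)) * (1 + ηr)) :
    ∃ v p : ℝ, 0 < v ∧ 0 < p ∧ v * h = 1 - a ∧ τ₀ * p < v + h * p ∧
      2 * (v + h * p) * τ₀ ≤ 1 - a^2 - a*p*ℓ^2 - 2*a*v*ℓ := by
  have h1a : 0 < 1 + a := by linarith
  have h1η : 0 < 1 + ηr := by linarith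
  have hhpos : 0 < h := by rw [hh]; positivity
  have hden : 0 < (1+ηr)*(a*ℓ^2 + 2*τ₀*h) :=
    mul_pos h1η (by nlinarith [mul_pos hτ₀ hhpos, mul_pos ha (mul_pos hℓ hℓ)])
  refine ⟨(1-a)/h, min ((1 - a^2)*ηr/((1+ηr)*(a*ℓ^2 + 2*τ₀*h))) (((1-a)/h)/(2*τ₀)),
    by apply div_pos <;> linarith, ?_, by field_simp, ?_, ?_⟩
  · apply lt_min
    · apply div_pos
      · nlinarith [mul_pos (mul_pos (by linarith : (0:ℝ) < 1-a) h1a) hηr]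
      · exact hden
    · apply div_pos (by apply div_pos <;> linarith) (by linarith)
  · have h1 : min ((1 - a^2)*ηr/((1+ηr)*(a*ℓ^2 + 2*τ₀*h))) (((1-a)/h)/(2*τ₀)) ≤ ((1-a)/h)/(2*τ₀) :=
      min_le_right _ _
    have hv : 0 < (1-a)/h := by apply div_pos <;> linarith
    have h2 : τ₀ * min ((1 - a^2)*ηr/((1+ηr)*(a*ℓ^2 + 2*τ₀*h))) (((1-a)/h)/(2*τ₀))
        ≤ ((1-a)/h)/2 := by
      calc _ ≤ τ₀ * (((1-a)/h)/(2*τ₀)) := mul_le_mul_of_nonneg_left h1 hτ₀.le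
        _ = ((1-a)/h)/2 := by field_simp
    have h3 : 0 < h * min ((1 - a^2)*ηr/((1+ηr)*(a*ℓ^2 + 2*τ₀*h))) (((1-a)/h)/(2*τ₀)) := by
      apply mul_pos hhpos
      apply lt_min
      · apply div_pos
        · nlinarith [mul_pos (mul_pos (by linarith : (0:ℝ) < 1-a) h1a) hηr]
        · exact hden
      · apply div_pos (by apply div_pos <;> linarith) (by linarith)
    linarith
  · have hkey : (1 - a^2) - 2*((1-a)/h)*(a*ℓ + τ₀)
        = ((1 - a^2)*ηr/((1+ηr)*(a*ℓ^2 + 2*τ₀*h))) * (a*ℓ^2 + 2*τ₀*h) := by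
      rw [hh]
      field_simp
      ring
    have hpP : min ((1 - a^2)*ηr/((1+ηr)*(a*ℓ^2 + 2*τ₀*h))) (((1-a)/h)/(2*τ₀)) * (a*ℓ^2 + 2*τ₀*h)
        ≤ ((1 - a^2)*ηr/((1+ηr)*(a*ℓ^2 + 2*τ₀*h))) * (a*ℓ^2 + 2*τ₀*h) :=
      mul_le_mul_of_nonneg_right (min_le_left _ _)
        (by nlinarith [mul_pos hτ₀ hhpos, mul_pos ha (mul_pos hℓ hℓ)])
    nlinarith [hkey, hpP]

lemma core_ineq (a v p h τ₀ ℓ τ ω : ℝ) (hv : 0 < v) (hp : 0 < p)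
    (hh : 0 < h) (hττ₀ : τ ≤ τ₀)
    (hvh : v * h = 1 - a)
    (hB : 2 * (v + h * p) * τ₀ ≤ 1 - a^2 - a*p*ℓ^2 - 2*a*v*ℓ) :
    ω^2*(v^2 + 2*p*(1-a)) ≤ ω^2*(((v+h*p) - τ*ω^2)^2 + (1 - a^2 - a*p*ℓ^2 - 2*a*v*ℓ)*ω^2) := by
  have hγ : 0 < v + h*p := by positivity
  have hγτ : 2*(v+h*p)*τ ≤ 2*(v+h*p)*τ₀ :=
    mul_le_mul_of_nonneg_left hττ₀ (by positivity)
  have h3 : (v+h*p)^2 - v^2 - 2*p*(1-a) = h^2*p^2 := by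
    linear_combination (2*p) * hvh
  have h2 : 0 ≤ ((1 - a^2 - a*p*ℓ^2 - 2*a*v*ℓ) - 2*(v+h*p)*τ) * ω^2 :=
    mul_nonneg (by linarith) (sq_nonneg ω)
  have h1 : ((v+h*p) - τ*ω^2)^2 + (1 - a^2 - a*p*ℓ^2 - 2*a*v*ℓ)*ω^2
      = τ^2*(ω^2)^2 + ((1 - a^2 - a*p*ℓ^2 - 2*a*v*ℓ) - 2*(v+h*p)*τ)*ω^2 + (v+h*p)^2 := by
    ring
  have hstar : v^2 + 2*p*(1-a) ≤ ((v+h*p) - τ*ω^2)^2 + (1 - a^2 - a*p*ℓ^2 - 2*a*v*ℓ)*ω^2 := by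
    rw [h1]
    nlinarith [sq_nonneg (τ*ω^2), sq_nonneg (h*p)]
  exact mul_le_mul_of_nonneg_left hstar (sq_nonneg ω)

set_option maxHeartbeats 1000000 in
theorem cacc_plus_theorem_part_b (r : ℕ) (hr : 0 < r) (τ₀ ℓ ηr kabar hwbar : ℝ)
    (hτ₀ : 0 < τ₀) (hℓ : 0 < ℓ) (hηr : 0 < ηr) (hka : 0 < kabar) (hka1 : kabar < 1)
    (hhwbar : hwbar = (2 * (τ₀ + kabar * ℓ) / (1 + kabar)) * (1 + ηr)) :
    ∃ kvbar kpbar : ℝ, 0 < kvbar ∧ 0 < kpbar ∧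
      kvbar + hwbar * kpbar > τ₀ * kpbar ∧
      ∀ τ : ℝ, 0 < τ → τ ≤ τ₀ → ∀ ω : ℝ, 0 ≤ ω →
        (‖(-(kabar : ℂ) * (ω : ℂ)^2 * Complex.exp (-(Complex.I * (ω : ℂ) * (ℓ : ℂ)))
            + Complex.I * (kvbar : ℂ) * (ω : ℂ) + (kpbar : ℂ))‖
          ≤ ‖(-(Complex.I * (τ : ℂ) * (ω : ℂ)^3) - (ω : ℂ)^2
            + Complex.I * ((kvbar + hwbar * kpbar : ℝ) : ℂ) * (ω : ℂ) + (kpbar : ℂ))‖)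
        ∧ (‖(Complex.exp (-(Complex.I * (ω : ℂ) * (ℓ : ℂ)))
              * (-(kabar : ℂ) * (ω : ℂ)^2 + Complex.I * (kvbar : ℂ) * (ω : ℂ) + (kpbar : ℂ)))‖
          ≤ ‖(-(Complex.I * (τ : ℂ) * (ω : ℂ)^3) - (ω : ℂ)^2
            + Complex.I * ((kvbar + hwbar * kpbar : ℝ) : ℂ) * (ω : ℂ) + (kpbar : ℂ))‖) := by
  obtain ⟨v, p, hv, hp, hvh, hγp, hB⟩ :=
    exists_vp τ₀ ℓ ηr kabar hwbar hτ₀ hℓ hηr hka hka1 hhwbar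
  set a := kabar with hadef
  refine ⟨v, p, hv, hp, by linarith, ?_⟩
  intro τ hτ hττ₀ ω hω
  have core := core_ineq a v p hwbar τ₀ ℓ τ ω hv hp (by
    have h1a : 0 < 1 + a := by linarith
    rw [hhwbar]; positivity) hττ₀ hvh hB
  have hpyth : Real.sin (ω*ℓ)^2 + Real.cos (ω*ℓ)^2 = 1 := Real.sin_sq_add_cos_sq _
  have E' : a^2*ω^4*(Real.sin (ω*ℓ)^2 + Real.cos (ω*ℓ)^2) = a^2*ω^4 := by rw [hpyth]; ring
  have hsb : Real.sin (ω*ℓ) ≤ ω*ℓ := Real.sin_le (by positivity)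
  have hcb : 1 - (ω*ℓ)^2/2 ≤ Real.cos (ω*ℓ) := Real.one_sub_sq_div_two_le_cos
  have h0 : (0:ℝ) ≤ 2*a*p*ω^2 := by positivity
  have h0' : (0:ℝ) ≤ 2*a*v*ω^3 := by positivity
  have l1 : -2*a*p*ω^2*Real.cos (ω*ℓ) ≤ -2*a*p*ω^2 + a*p*ℓ^2*ω^4 := by
    nlinarith [mul_le_mul_of_nonneg_left hcb h0]
  have l2 : 2*a*v*ω^3*Real.sin (ω*ℓ) ≤ 2*a*v*ℓ*ω^4 := by
    nlinarith [mul_le_mul_of_nonneg_left hsb h0']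
  have hexp : Complex.exp (-(Complex.I * (ω:ℂ) * (ℓ:ℂ)))
      = ((Real.cos (ω*ℓ) : ℝ) : ℂ) + ((-Real.sin (ω*ℓ) : ℝ) : ℂ) * Complex.I := by
    rw [show -(Complex.I * (ω:ℂ) * (ℓ:ℂ)) = ((-(ω*ℓ) : ℝ) : ℂ) * Complex.I by push_cast; ring,
      Complex.exp_mul_I]
    rw [← Complex.ofReal_cos, ← Complex.ofReal_sin, Real.cos_neg, Real.sin_neg]
    all_goals (push_cast; ring)
  have hD : ‖(-(Complex.I * (τ : ℂ) * (ω : ℂ)^3) - (ω : ℂ)^2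
          + Complex.I * ((v + hwbar * p : ℝ) : ℂ) * (ω : ℂ) + (p : ℂ))‖
      = Real.sqrt ((p - ω^2)^2 + ((v + hwbar*p)*ω - τ*ω^3)^2) := by
    rw [show -(Complex.I * (τ : ℂ) * (ω : ℂ)^3) - (ω : ℂ)^2
          + Complex.I * ((v + hwbar * p : ℝ) : ℂ) * (ω : ℂ) + (p : ℂ)
        = ((p - ω^2 : ℝ) : ℂ) + (((v + hwbar*p)*ω - τ*ω^3 : ℝ) : ℂ) * Complex.I by
      push_cast; ring]
    exact Complex.norm_add_mul_I _ _
  constructor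
  · rw [hD]
    rw [show -(a : ℂ) * (ω : ℂ)^2 * Complex.exp (-(Complex.I * (ω : ℂ) * (ℓ : ℂ)))
          + Complex.I * (v : ℂ) * (ω : ℂ) + (p : ℂ)
        = ((p - a*ω^2*Real.cos (ω*ℓ) : ℝ) : ℂ)
          + ((v*ω + a*ω^2*Real.sin (ω*ℓ) : ℝ) : ℂ) * Complex.I by
      rw [hexp]; push_cast; ring]
    rw [Complex.norm_add_mul_I]
    apply Real.sqrt_le_sqrt
    nlinarith [core, l1, l2, E']
  · rw [hD, norm_mul]
    have habs1 : ‖Complex.exp (-(Complex.I * (ω:ℂ) * (ℓ:ℂ)))‖ = 1 := by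
      rw [Complex.norm_exp]; simp
    rw [habs1, one_mul]
    rw [show -(a : ℂ) * (ω : ℂ)^2 + Complex.I * (v : ℂ) * (ω : ℂ) + (p : ℂ)
        = ((p - a*ω^2 : ℝ) : ℂ) + ((v*ω : ℝ) : ℂ) * Complex.I by push_cast; ring]
    rw [Complex.norm_add_mul_I]
    apply Real.sqrt_le_sqrt
    nlinarith [core, mul_nonneg (mul_nonneg (mul_nonneg hka.le hp.le) (sq_nonneg ℓ)) (pow_nonneg hω 4),
      mul_nonneg (mul_nonneg (mul_nonneg hka.le hv.le) hℓ.le) (pow_nonneg hω 4)]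
end
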